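/- Let γ > 0 and γ₂ > 0, and let P ∈ ℝ^{N×N} be symmetric positive semidefinite with γ P ⪯ γ₂ I. For λ, x ∈ ℝᴺ set λ⁺ = λ + γ P Z^{1/2} x. Then ‖λ⁺ − λ‖² ≤ (2 ρ γ₂² / μ²) ‖∇_x L̃_α(x, λ)‖² + 2 γ₂ ‖∇g(λ)‖²_{γP}. -/

import Mathlib

open Matrix Set InnerProductSpace
open scoped RealInnerProductSpace Pointwise

noncomputable section

/-- The positive semidefinite square root of a positive semidefinite matrix
(removed from Mathlib; reinstated with its former definition). -/
def Matrix.PosSemidef.sqrt {n 𝕜 : Type*} [Fintype n] [RCLike 𝕜] [PartialOrder 𝕜] [DecidableEq n]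
    {A : Matrix n n 𝕜} (hA : A.PosSemidef) : Matrix n n 𝕜 :=
  hA.1.eigenvectorUnitary.1 * diagonal ((↑) ∘ (√·) ∘ hA.1.eigenvalues) *
    (star hA.1.eigenvectorUnitary : Matrix n n 𝕜)

lemma Matrix.PosSemidef.sqrt_isHermitian {n : Type*} [Fintype n] [DecidableEq n]
    {A : Matrix n n ℝ} (hA : A.PosSemidef) : hA.sqrt.IsHermitian := by
  unfold Matrix.IsHermitian Matrix.PosSemidef.sqrt
  simp [Matrix.conjTranspose_mul, Matrix.star_eq_conjTranspose, Matrix.mul_assoc]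

lemma Matrix.PosSemidef.sqrt_mul_self {n : Type*} [Fintype n] [DecidableEq n]
    {A : Matrix n n ℝ} (hA : A.PosSemidef) : hA.sqrt * hA.sqrt = A := by
  have hU : (star hA.1.eigenvectorUnitary : Matrix n n ℝ) * hA.1.eigenvectorUnitary.1 = 1 :=
    Unitary.coe_star_mul_self _
  have hD : diagonal ((↑) ∘ (√·) ∘ hA.1.eigenvalues) * diagonal ((↑) ∘ (√·) ∘ hA.1.eigenvalues)
      = diagonal (((↑) : ℝ → ℝ) ∘ hA.1.eigenvalues) := by
    rw [Matrix.diagonal_mul_diagonal]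
    congr 1
    funext i
    simp [Real.mul_self_sqrt (hA.eigenvalues_nonneg i)]
  conv_rhs => rw [hA.1.spectral_theorem]
  unfold Matrix.PosSemidef.sqrt
  rw [Unitary.conjStarAlgAut_apply]
  calc _ = hA.1.eigenvectorUnitary.1 * diagonal ((↑) ∘ (√·) ∘ hA.1.eigenvalues) *
        ((star hA.1.eigenvectorUnitary : Matrix n n ℝ) * hA.1.eigenvectorUnitary.1) *
        diagonal ((↑) ∘ (√·) ∘ hA.1.eigenvalues) * (star hA.1.eigenvectorUnitary : Matrix n n ℝ) := by
          simp only [Matrix.mul_assoc]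
          rfl
    _ = _ := by
          rw [hU, Matrix.mul_one, Matrix.mul_assoc _ (diagonal _) (diagonal _), hD]
          rfl

section ConvexAux

variable {E : Type*} [NormedAddCommGroup E] [InnerProductSpace ℝ E] [CompleteSpace E]

/-- First-order condition for convex differentiable functions. -/
lemma convex_inner_le {g : E → ℝ} (hg : ConvexOn ℝ univ g) {x g' : E}
    (hd : HasGradientAt g g' x) (y : E) : ⟪g', y - x⟫ ≤ g y - g x := by
  set φ : ℝ → ℝ := fun t => g (x + t • (y - x)) with hφ
  have hφconv : ConvexOn ℝ univ φ := by
    have := hg.comp_affineMap (AffineMap.lineMap x y : ℝ →ᵃ[ℝ] E)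
    simp only [Set.preimage_univ] at this
    have e : φ = g ∘ (AffineMap.lineMap x y : ℝ →ᵃ[ℝ] E) := by
      funext t
      simp [φ, AffineMap.lineMap_apply, add_comm]
    rw [e]; exact this
  have h1 : HasDerivAt (fun t : ℝ => x + t • (y - x)) (y - x) 0 := by
    simpa using ((hasDerivAt_id (0:ℝ)).smul_const (y - x)).const_add x
  have hF : HasFDerivAt g (toDual ℝ E g') x := hd
  have hφd : HasDerivAt φ ⟪g', y - x⟫ 0 := by
    have hF' : HasFDerivAt g (toDual ℝ E g') (x + (0:ℝ) • (y - x)) := by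
      simpa using hF
    have := hF'.comp_hasDerivAt (0:ℝ) h1
    simp [φ, toDual_apply_apply] at this
    exact this
  have := hφconv.le_slope_of_hasDerivAt (mem_univ (0:ℝ)) (mem_univ (1:ℝ)) one_pos hφd
  simpa [slope_def_field, φ] using this

lemma hasGradientAt_half_norm_sq (m : ℝ) (z : E) :
    HasGradientAt (fun w : E => m / 2 * ‖w‖ ^ 2) (m • z) z := by
  rw [hasGradientAt_iff_hasFDerivAt]
  have h1 : HasFDerivAt (fun w : E => ⟪w, w⟫) ((fderivInnerCLM ℝ (z, z)).comp
      ((ContinuousLinearMap.id ℝ E).prod (ContinuousLinearMap.id ℝ E))) z :=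
    (hasFDerivAt_id z).inner ℝ (hasFDerivAt_id z)
  have h2 : HasFDerivAt (fun w : E => m / 2 * ⟪w, w⟫)
      ((m / 2) • ((fderivInnerCLM ℝ (z, z)).comp
        ((ContinuousLinearMap.id ℝ E).prod (ContinuousLinearMap.id ℝ E)))) z :=
    h1.const_mul (m / 2)
  have heq : (fun w : E => m / 2 * ‖w‖ ^ 2) = fun w : E => m / 2 * ⟪w, w⟫ := by
    funext w; rw [real_inner_self_eq_norm_sq]
  rw [heq]
  refine h2.congr_fderiv ?_
  ext v
  simp [toDual_apply_apply, fderivInnerCLM, real_inner_smul_left]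
  rw [real_inner_comm v z]
  ring

lemma strong_mono {f : E → ℝ} {m : ℝ} (hsc : StrongConvexOn univ m f)
    {x y gx gy : E} (hx : HasGradientAt f gx x) (hy : HasGradientAt f gy y) :
    m * ‖x - y‖ ^ 2 ≤ ⟪gx - gy, x - y⟫ := by
  set g : E → ℝ := fun z => f z - m / 2 * ‖z‖ ^ 2 with hg
  have hgconv : ConvexOn ℝ univ g := strongConvexOn_iff_convex.mp hsc
  have hdg : ∀ (z : E) (gz : E), HasGradientAt f gz z →
      HasGradientAt g (gz - m • z) z := by
    intro z gz hz
    rw [hasGradientAt_iff_hasFDerivAt] at hz ⊢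
    have := hz.sub (hasGradientAt_half_norm_sq m z)
    simp [map_sub] at this ⊢
    exact this
  have h1 := convex_inner_le hgconv (hdg x gx hx) y
  have h2 := convex_inner_le hgconv (hdg y gy hy) x
  have hxy : x - y = -(y - x) := by abel
  have e1 : ⟪gx - m • x, y - x⟫ ≤ g y - g x := h1
  have e2 : ⟪gy - m • y, x - y⟫ ≤ g x - g y := h2
  have key : ⟪gx - m • x, y - x⟫ + ⟪gy - m • y, x - y⟫ ≤ 0 := by linarith
  have expand : ⟪gx - m • x, y - x⟫ + ⟪gy - m • y, x - y⟫
      = -⟪gx - gy, x - y⟫ + m * ⟪x - y, x - y⟫ := by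
    simp only [inner_sub_left, inner_sub_right, real_inner_smul_left, neg_sub]
    have h := real_inner_comm x y
    ring_nf
  rw [← real_inner_self_eq_norm_sq]
  nlinarith [key, expand]

end ConvexAux

section MatrixAux

variable {n : Type*} [Fintype n] [DecidableEq n]

lemma inner_toEuclideanLin (M : Matrix n n ℝ) (u v : EuclideanSpace ℝ n) :
    ⟪u, Matrix.toEuclideanLin M v⟫ =
      (WithLp.equiv 2 (n → ℝ) u) ⬝ᵥ (M *ᵥ (WithLp.equiv 2 (n → ℝ) v)) := by
  simp [Matrix.toEuclideanLin_apply, PiLp.inner_apply, dotProduct, RCLike.inner_apply,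
    mul_comm]

lemma psd_inner_nonneg {M : Matrix n n ℝ} (hM : M.PosSemidef) (v : EuclideanSpace ℝ n) :
    0 ≤ ⟪v, Matrix.toEuclideanLin M v⟫ := by
  rw [inner_toEuclideanLin]
  simpa using hM.re_dotProduct_nonneg ((WithLp.equiv 2 (n → ℝ)) v)

lemma herm_inner_comm {M : Matrix n n ℝ} (hM : M.IsHermitian) (u v : EuclideanSpace ℝ n) :
    ⟪Matrix.toEuclideanLin M u, v⟫ = ⟪u, Matrix.toEuclideanLin M v⟫ :=
  (Matrix.isHermitian_iff_isSymmetric.mp hM) u v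

lemma toEuclideanLin_mul_apply (A B : Matrix n n ℝ) (v : EuclideanSpace ℝ n) :
    Matrix.toEuclideanLin (A * B) v = Matrix.toEuclideanLin A (Matrix.toEuclideanLin B v) := by
  simp [Matrix.toEuclideanLin_apply, Matrix.mulVec_mulVec]

lemma sqrt_norm_sq {M : Matrix n n ℝ} (hM : M.PosSemidef) (v : EuclideanSpace ℝ n) :
    ‖Matrix.toEuclideanLin hM.sqrt v‖ ^ 2 = ⟪v, Matrix.toEuclideanLin M v⟫ := by
  rw [← real_inner_self_eq_norm_sq, herm_inner_comm hM.sqrt_isHermitian,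
    ← toEuclideanLin_mul_apply, hM.sqrt_mul_self]

lemma toEuclideanLin_smul_one (c : ℝ) (v : EuclideanSpace ℝ n) :
    Matrix.toEuclideanLin (c • (1 : Matrix n n ℝ)) v = c • v := by
  simp [Matrix.toEuclideanLin_apply, Matrix.smul_mulVec]

lemma quad_le_of_upper {Q : Matrix n n ℝ} {c : ℝ}
    (hle : (c • (1 : Matrix n n ℝ) - Q).PosSemidef) (v : EuclideanSpace ℝ n) :
    ⟪v, Matrix.toEuclideanLin Q v⟫ ≤ c * ‖v‖ ^ 2 := by
  have h := psd_inner_nonneg hle v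
  rw [map_sub] at h
  simp only [LinearMap.sub_apply, inner_sub_right, toEuclideanLin_smul_one,
    real_inner_smul_right] at h
  rw [← real_inner_self_eq_norm_sq]
  linarith

lemma norm_sq_lin_le {Q : Matrix n n ℝ} {c : ℝ} (hQ : Q.PosSemidef)
    (hle : (c • (1 : Matrix n n ℝ) - Q).PosSemidef) (v : EuclideanSpace ℝ n) :
    ‖Matrix.toEuclideanLin Q v‖ ^ 2 ≤ c * ⟪v, Matrix.toEuclideanLin Q v⟫ := by
  set u := Matrix.toEuclideanLin hQ.sqrt v with hu
  have hQv : Matrix.toEuclideanLin Q v = Matrix.toEuclideanLin hQ.sqrt u := by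
    rw [hu, ← toEuclideanLin_mul_apply, hQ.sqrt_mul_self]
  calc ‖Matrix.toEuclideanLin Q v‖ ^ 2
      = ⟪u, Matrix.toEuclideanLin Q u⟫ := by rw [hQv, sqrt_norm_sq hQ u]
    _ ≤ c * ‖u‖ ^ 2 := quad_le_of_upper hle u
    _ = c * ⟪v, Matrix.toEuclideanLin Q v⟫ := by rw [hu, sqrt_norm_sq hQ v]

lemma two_sq_bound {E : Type*} [SeminormedAddCommGroup E] (a b : E) :
    ‖a + b‖ ^ 2 ≤ 2 * ‖a‖ ^ 2 + 2 * ‖b‖ ^ 2 := by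
  have h := norm_add_le a b
  nlinarith [mul_self_le_mul_self (norm_nonneg (a + b)) h, sq_nonneg (‖a‖ - ‖b‖)]

lemma quad_le_rho {Z : Matrix n n ℝ} (hH : Z.IsHermitian) {ρ : ℝ}
    (hρmax : ∀ c ∈ spectrum ℝ Z, c ≤ ρ) (v : EuclideanSpace ℝ n) :
    ⟪v, Matrix.toEuclideanLin Z v⟫ ≤ ρ * ‖v‖ ^ 2 := by
  have hsub : (ρ • (1 : Matrix n n ℝ) - Z).IsHermitian := by
    have h1 : (ρ • (1 : Matrix n n ℝ)).IsHermitian := by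
      unfold Matrix.IsHermitian
      simp
    exact h1.sub hH
  have hspec : spectrum ℝ (ρ • (1 : Matrix n n ℝ) - Z) = ({ρ} : Set ℝ) - spectrum ℝ Z := by
    rw [← Algebra.algebraMap_eq_smul_one, spectrum.singleton_sub_eq]
  have hpsd : (ρ • (1 : Matrix n n ℝ) - Z).PosSemidef := by
    apply hsub.posSemidef_iff_eigenvalues_nonneg.mpr
    intro i
    have hmem := hsub.eigenvalues_mem_spectrum_real i
    rw [hspec] at hmem
    rw [Set.mem_sub] at hmem
    obtain ⟨a, ha, b, hb, hab⟩ := hmem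
    rw [Set.mem_singleton_iff] at ha
    subst ha
    rw [← hab, Pi.zero_apply]
    linarith [hρmax b hb]
  exact quad_le_of_upper hpsd v

end MatrixAux

/-- The augmented Lagrangian `L̃_α(x, λ) = f(x) + ⟨λ, Z^{1/2} x⟩ + (α/2) xᵀ Z x`,
where `Z^{1/2}` is the positive semidefinite square root of `Z`. -/
def augLag (N : ℕ) (f : EuclideanSpace ℝ (Fin N) → ℝ) (α : ℝ)
    (Z : Matrix (Fin N) (Fin N) ℝ) (hZ : Z.PosSemidef)
    (x lam : EuclideanSpace ℝ (Fin N)) : ℝ :=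
  f x + ⟪lam, Matrix.toEuclideanLin hZ.sqrt x⟫ +
    α / 2 * ⟪x, Matrix.toEuclideanLin Z x⟫

set_option maxHeartbeats 1600000 in
/-- Lemma 3.3, second bound: with `λ⁺ = λ + γ P Z^{1/2} x`, `‖λ⁺ − λ‖² ≤ (2ργ₂²/μ²) ‖∇_x L̃_α(x,λ)‖² + 2γ₂ ‖∇g(λ)‖²_{γP}`. -/
theorem dual_step_bound
    (N : ℕ) (hN : 0 < N)
    (f : EuclideanSpace ℝ (Fin N) → ℝ) (μ L : ℝ) (hμ : 0 < μ) (hL : 0 < L)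
    (hf : ContDiff ℝ 2 f)
    (hsc : StrongConvexOn Set.univ μ f)
    (hlip : LipschitzWith L.toNNReal (gradient f))
    (Z : Matrix (Fin N) (Fin N) ℝ) (hZ : Z.PosSemidef) (hZ0 : Z ≠ 0)
    (ρ σ : ℝ)
    (hρ : ρ ∈ spectrum ℝ Z) (hρmax : ∀ c ∈ spectrum ℝ Z, c ≤ ρ)
    (hσ : σ ∈ spectrum ℝ Z) (hσpos : 0 < σ) (hσmin : ∀ c ∈ spectrum ℝ Z, 0 < c → σ ≤ c)
    (α : ℝ) (hα : 0 < α)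
    (xstar : EuclideanSpace ℝ (Fin N) → EuclideanSpace ℝ (Fin N))
    (hxstar : ∀ lam, IsMinOn (fun x => augLag N f α Z hZ x lam) Set.univ (xstar lam))
    (γ γ₂ : ℝ) (hγ : 0 < γ) (hγ₂ : 0 < γ₂)
    (P : Matrix (Fin N) (Fin N) ℝ) (hP : P.PosSemidef)
    (hPle : (γ₂ • (1 : Matrix (Fin N) (Fin N) ℝ) - γ • P).PosSemidef)
    :
    ∀ (lam x : EuclideanSpace ℝ (Fin N)),
      ‖(lam + γ • Matrix.toEuclideanLin P (Matrix.toEuclideanLin hZ.sqrt x)) - lam‖ ^ 2 ≤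
        2 * ρ * γ₂ ^ 2 / μ ^ 2 * ‖gradient (fun y => augLag N f α Z hZ y lam) x‖ ^ 2 +
          2 * γ₂ * ⟪Matrix.toEuclideanLin hZ.sqrt (xstar lam),
            Matrix.toEuclideanLin (γ • P) (Matrix.toEuclideanLin hZ.sqrt (xstar lam))⟫ := by
  intro lam x
  set A : EuclideanSpace ℝ (Fin N) →ₗ[ℝ] EuclideanSpace ℝ (Fin N) :=
    Matrix.toEuclideanLin hZ.sqrt with hA
  set Zl : EuclideanSpace ℝ (Fin N) →ₗ[ℝ] EuclideanSpace ℝ (Fin N) :=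
    Matrix.toEuclideanLin Z with hZl
  set Lfun : EuclideanSpace ℝ (Fin N) → ℝ := fun y => augLag N f α Z hZ y lam with hLfun
  -- differentiability
  have hfd : Differentiable ℝ f := hf.differentiable (by norm_num)
  have hAdiff : Differentiable ℝ (fun y : EuclideanSpace ℝ (Fin N) => A y) := by
    have := (LinearMap.toContinuousLinearMap A).differentiable
    simpa using this
  have hZldiff : Differentiable ℝ (fun y : EuclideanSpace ℝ (Fin N) => Zl y) := by
    have := (LinearMap.toContinuousLinearMap Zl).differentiable
    simpa using this
  have hdiff : Differentiable ℝ Lfun := by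
    have h2 : Differentiable ℝ (fun y : EuclideanSpace ℝ (Fin N) => ⟪lam, A y⟫) :=
      (differentiable_const lam).inner ℝ hAdiff
    have h3 : Differentiable ℝ (fun y : EuclideanSpace ℝ (Fin N) => α / 2 * ⟪y, Zl y⟫) :=
      (differentiable_id.inner ℝ hZldiff).const_mul _
    exact (hfd.add h2).add h3
  -- strong convexity of Lfun
  have hℓsym : ∀ u v : EuclideanSpace ℝ (Fin N), ⟪u, Zl v⟫ = ⟪v, Zl u⟫ := by
    intro u v
    rw [← herm_inner_comm hZ.1 v u, real_inner_comm]
  have hconvc : ConvexOn ℝ univ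
      (fun y : EuclideanSpace ℝ (Fin N) => ⟪lam, A y⟫ + α / 2 * ⟪y, Zl y⟫) := by
    refine ⟨convex_univ, ?_⟩
    intro u _ v _ a b ha hb hab
    have hq0 : 0 ≤ ⟪u, Zl u⟫ - 2 * ⟪u, Zl v⟫ + ⟪v, Zl v⟫ := by
      have := psd_inner_nonneg hZ (u - v)
      simp only [map_sub, inner_sub_left, inner_sub_right] at this
      have h := hℓsym u v
      linarith
    simp only [smul_eq_mul, map_add, _root_.map_smul, inner_add_right, inner_smul_right,
      inner_add_left, inner_smul_left, RCLike.star_def, conj_trivial]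
    rw [hℓsym v u]
    have hb1 : b = 1 - a := by linarith
    subst hb1
    nlinarith [mul_nonneg (mul_nonneg (half_pos hα).le (mul_nonneg ha hb)) hq0]
  have hstrong : StrongConvexOn univ μ Lfun := by
    have hadd := hsc.add hconvc.uniformConvexOn_zero
    have hfun : (f + fun y : EuclideanSpace ℝ (Fin N) => ⟪lam, A y⟫ + α / 2 * ⟪y, Zl y⟫) = Lfun := by
      funext y
      simp only [Pi.add_apply, hLfun, augLag]
      ring
    have hmod : ((fun r : ℝ => μ / 2 * r ^ 2) + (0 : ℝ → ℝ)) = fun r : ℝ => μ / 2 * r ^ 2 := by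
      funext r; simp
    rw [hfun, hmod] at hadd
    exact hadd
  -- gradient of Lfun at xstar lam is zero
  have hgrad0 : gradient Lfun (xstar lam) = 0 := by
    have hmin : IsLocalMin Lfun (xstar lam) :=
      Filter.Eventually.of_forall (fun y => isMinOn_iff.mp (hxstar lam) y (mem_univ y))
    have hfz := hmin.fderiv_eq_zero
    unfold gradient
    rw [hfz]
    simp
  set G : EuclideanSpace ℝ (Fin N) := gradient Lfun x with hG
  have hGx : HasGradientAt Lfun G x := (hdiff x).hasGradientAt
  have hGs : HasGradientAt Lfun 0 (xstar lam) := by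
    rw [← hgrad0]; exact (hdiff (xstar lam)).hasGradientAt
  set d : EuclideanSpace ℝ (Fin N) := x - xstar lam with hd
  have hmono : μ * ‖d‖ ^ 2 ≤ ⟪G, d⟫ := by
    have := strong_mono hstrong hGx hGs
    simpa [hd] using this
  have hcs : ⟪G, d⟫ ≤ ‖G‖ * ‖d‖ := real_inner_le_norm _ _
  have hd2 : μ ^ 2 * ‖d‖ ^ 2 ≤ ‖G‖ ^ 2 := by
    nlinarith [norm_nonneg d, norm_nonneg G, sq_nonneg (‖G‖ - μ * ‖d‖)]
  -- matrix side
  have hQpsd : (γ • P).PosSemidef := by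
    refine Matrix.PosSemidef.of_dotProduct_mulVec_nonneg ?_ ?_
    · unfold Matrix.IsHermitian
      rw [Matrix.conjTranspose_smul, hP.1.eq]
      simp
    · intro v
      have := hP.dotProduct_mulVec_nonneg v
      rw [Matrix.smul_mulVec, dotProduct_smul]
      exact mul_nonneg hγ.le this
  set Ql : EuclideanSpace ℝ (Fin N) →ₗ[ℝ] EuclideanSpace ℝ (Fin N) :=
    Matrix.toEuclideanLin (γ • P) with hQl
  have hQlP : ∀ v : EuclideanSpace ℝ (Fin N),
      Ql v = γ • Matrix.toEuclideanLin P v := by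
    intro v
    rw [hQl, _root_.map_smul]
    rfl
  have hρ0 : (0:ℝ) ≤ ρ := le_trans hσpos.le (hρmax σ hσ)
  -- LHS rewrite
  have hLHS : (lam + γ • Matrix.toEuclideanLin P (A x)) - lam = Ql (A x) := by
    rw [add_sub_cancel_left, hQlP]
  -- split
  have hsplit : Ql (A x) = Ql (A d) + Ql (A (xstar lam)) := by
    rw [← map_add, ← map_add, hd, sub_add_cancel]
  have hab : ‖Ql (A x)‖ ^ 2 ≤ 2 * ‖Ql (A d)‖ ^ 2 + 2 * ‖Ql (A (xstar lam))‖ ^ 2 := by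
    rw [hsplit]
    exact two_sq_bound _ _
  -- term 1
  have t1a : ‖Ql (A d)‖ ^ 2 ≤ γ₂ * ⟪A d, Ql (A d)⟫ := norm_sq_lin_le hQpsd hPle (A d)
  have t1b : ⟪A d, Ql (A d)⟫ ≤ γ₂ * ‖A d‖ ^ 2 := quad_le_of_upper hPle (A d)
  have t1c : ‖A d‖ ^ 2 = ⟪d, Zl d⟫ := sqrt_norm_sq hZ d
  have t1d : ⟪d, Zl d⟫ ≤ ρ * ‖d‖ ^ 2 := quad_le_rho hZ.1 hρmax d
  have t1 : ‖Ql (A d)‖ ^ 2 ≤ γ₂ ^ 2 * ρ * ‖d‖ ^ 2 := by nlinarith [hγ₂.le]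
  have hT1 : 2 * ‖Ql (A d)‖ ^ 2 ≤ 2 * ρ * γ₂ ^ 2 / μ ^ 2 * ‖G‖ ^ 2 := by
    rw [div_mul_eq_mul_div, le_div_iff₀ (by positivity : (0:ℝ) < μ ^ 2)]
    nlinarith [mul_le_mul_of_nonneg_left hd2
        (by positivity : (0:ℝ) ≤ 2 * γ₂ ^ 2 * ρ),
      mul_le_mul_of_nonneg_right t1 (by positivity : (0:ℝ) ≤ μ ^ 2)]
  -- term 2
  have hT2 : 2 * ‖Ql (A (xstar lam))‖ ^ 2 ≤ 2 * γ₂ * ⟪A (xstar lam), Ql (A (xstar lam))⟫ := by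
    have := norm_sq_lin_le hQpsd hPle (A (xstar lam))
    linarith
  -- assemble
  rw [hLHS]
  have : ⟪Matrix.toEuclideanLin hZ.sqrt (xstar lam),
      Matrix.toEuclideanLin (γ • P) (Matrix.toEuclideanLin hZ.sqrt (xstar lam))⟫
      = ⟪A (xstar lam), Ql (A (xstar lam))⟫ := rfl
  rw [this]
  linarith

end
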